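/- If the admissible family {φ(θ), θ ∈ T_0} is both LCE and RCE with sup_{θ ∈ T_0} E[φ(θ)] < ∞, then the value function family {v(S), S ∈ T_0} is LCE: for any stopping time S and any sequence S_n ↑ S a.s., E[v(S_n)] → E[v(S)]. -/

import Mathlib

/-!
The family `{E[φ(θ) | F_S] : θ ∈ T_S}` is directed upwards (paste two stopping times along an
`F_S`-event), so its essential supremum is squeezed between an increasing sequence drawn from it
and the limit of that sequence, whence `E[v(S)] = sup_{θ ∈ T_S} E[φ(θ)]`. Since `S_n ≤ S`, this
supremum for `S_n` is at least the one for `S`. Conversely, admissibility gives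
`φ(θ ⊔ S) + φ(θ ⊓ S) = φ(θ) + φ(S)`, so for `θ ∈ T_{S_n}` the reward `E[φ(θ)]` is at most
`sup_{T_S} E φ + W_n - E[φ(S)]`, where `W_n` is the supremum over stopping times between `S_n`
and `S`. Finally `W_n → E[φ(S)]`: the running maxima of near-optimal stopping times for `W_n`
increase to `S`, and `φ` is LCE.
-/

open MeasureTheory Filter ENNReal

variable {Ω : Type*}

/-- A stopping time of the filtration `ℱ` with values in `[0, T]` (an element of `T_0`). -/
def IsStoppingTimeIn {m : MeasurableSpace Ω} (ℱ : Filtration ℝ m) (T : ℝ)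
    (τ : Ω → ℝ) : Prop :=
  IsStoppingTime ℱ (fun ω => (τ ω : WithTop ℝ)) ∧ ∀ ω, τ ω ∈ Set.Icc (0 : ℝ) T

/-- `θ` belongs to `T_S`: a `[0,T]`-valued stopping time with `θ ≥ S` a.s. -/
def MemTS {m : MeasurableSpace Ω} (ℱ : Filtration ℝ m) (μ : Measure Ω) (T : ℝ)
    (S θ : Ω → ℝ) : Prop :=
  IsStoppingTimeIn ℱ T θ ∧ ∀ᵐ ω ∂μ, S ω ≤ θ ω

/-- An admissible family of nonnegative random variables indexed by stopping times:
`φ(τ)` is `F_τ`-measurable and `φ(τ) = φ(τ')` a.s. on `{τ = τ'}`. -/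
def Admissible {m : MeasurableSpace Ω} (ℱ : Filtration ℝ m) (μ : Measure Ω) (T : ℝ)
    (φ : (Ω → ℝ) → Ω → ℝ) : Prop :=
  (∀ τ (hτ : IsStoppingTimeIn ℱ T τ),
      Measurable[hτ.1.measurableSpace] (φ τ) ∧ ∀ ω, 0 ≤ φ τ ω) ∧
  (∀ τ τ', IsStoppingTimeIn ℱ T τ → IsStoppingTimeIn ℱ T τ' →
      ∀ᵐ ω ∂μ, τ ω = τ' ω → φ τ ω = φ τ' ω)

/-- `v` is an essential supremum of the family of random variables `s`:
`v` dominates every member a.s., and is a.s. below any other a.s. upper bound. -/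
def IsEssSupOf {m : MeasurableSpace Ω} (μ : Measure Ω) (s : Set (Ω → ℝ))
    (v : Ω → ℝ) : Prop :=
  (∀ f ∈ s, f ≤ᵐ[μ] v) ∧ ∀ g : Ω → ℝ, (∀ f ∈ s, f ≤ᵐ[μ] g) → v ≤ᵐ[μ] g

/-- The family `{E[φ(θ) | F_S] : θ ∈ T_S}`. -/
def valueSet {m : MeasurableSpace Ω} (ℱ : Filtration ℝ m) (μ : Measure Ω) (T : ℝ)
    (φ : (Ω → ℝ) → Ω → ℝ) (S : Ω → ℝ) (hS : IsStoppingTime ℱ (fun ω => (S ω : WithTop ℝ))) : Set (Ω → ℝ) :=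
  {f | ∃ θ, MemTS ℱ μ T S θ ∧ f = μ[φ θ | hS.measurableSpace]}

/-- `v` is the value function family of the reward family `φ`:
`v(S) = ess sup_{θ ∈ T_S} E[φ(θ) | F_S]`, chosen `F_S`-measurable. -/
def IsValueFam {m : MeasurableSpace Ω} (ℱ : Filtration ℝ m) (μ : Measure Ω) (T : ℝ)
    (φ v : (Ω → ℝ) → Ω → ℝ) : Prop :=
  ∀ S (hS : IsStoppingTimeIn ℱ T S),
    Measurable[hS.1.measurableSpace] (v S) ∧
    IsEssSupOf μ (valueSet ℱ μ T φ S hS.1) (v S)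

/-- Right continuity in expectation along stopping times. -/
def RCEFam {m : MeasurableSpace Ω} (ℱ : Filtration ℝ m) (μ : Measure Ω) (T : ℝ)
    (φ : (Ω → ℝ) → Ω → ℝ) : Prop :=
  ∀ θ (θn : ℕ → Ω → ℝ), IsStoppingTimeIn ℱ T θ →
    (∀ n, IsStoppingTimeIn ℱ T (θn n)) →
    (∀ᵐ ω ∂μ, Antitone (fun n => θn n ω) ∧
      Tendsto (fun n => θn n ω) atTop (nhds (θ ω))) →
    Tendsto (fun n => ∫ ω, φ (θn n) ω ∂μ) atTop (nhds (∫ ω, φ θ ω ∂μ))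

/-- Left continuity in expectation along stopping times. -/
def LCEFam {m : MeasurableSpace Ω} (ℱ : Filtration ℝ m) (μ : Measure Ω) (T : ℝ)
    (φ : (Ω → ℝ) → Ω → ℝ) : Prop :=
  ∀ θ (θn : ℕ → Ω → ℝ), IsStoppingTimeIn ℱ T θ →
    (∀ n, IsStoppingTimeIn ℱ T (θn n)) →
    (∀ᵐ ω ∂μ, Monotone (fun n => θn n ω) ∧
      Tendsto (fun n => θn n ω) atTop (nhds (θ ω))) →
    Tendsto (fun n => ∫ ω, φ (θn n) ω ∂μ) atTop (nhds (∫ ω, φ θ ω ∂μ))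

/-- The integrability condition `v(0) = sup_{θ ∈ T_0} E[φ(θ)] < ∞`. -/
def BddReward {m : MeasurableSpace Ω} (ℱ : Filtration ℝ m) (μ : Measure Ω) (T : ℝ)
    (φ : (Ω → ℝ) → Ω → ℝ) : Prop :=
  (⨆ θ : {θ : Ω → ℝ // IsStoppingTimeIn ℱ T θ},
      ∫⁻ ω, ENNReal.ofReal (φ θ.1 ω) ∂μ) < ⊤

/-- A supermartingale system: an admissible family `h` with
`E[h(θ) | F_{θ'}] ≤ h(θ')` a.s. whenever `θ ≥ θ'` a.s. -/
def SupermartSys {m : MeasurableSpace Ω} (ℱ : Filtration ℝ m) (μ : Measure Ω) (T : ℝ)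
    (h : (Ω → ℝ) → Ω → ℝ) : Prop :=
  Admissible ℱ μ T h ∧
  ∀ θ θ' (hθ : IsStoppingTimeIn ℱ T θ) (hθ' : IsStoppingTimeIn ℱ T θ'),
    (∀ᵐ ω ∂μ, θ' ω ≤ θ ω) →
    μ[h θ | hθ'.1.measurableSpace] ≤ᵐ[μ] h θ'

/-- `F_0` contains only sets of probability `0` or `1`. -/
def TrivialF0 {m : MeasurableSpace Ω} (ℱ : Filtration ℝ m) (μ : Measure Ω) : Prop :=
  ∀ A : Set Ω, MeasurableSet[ℱ 0] A → μ A = 0 ∨ μ A = 1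


open scoped Topology

namespace IsStoppingTimeIn

variable {m : MeasurableSpace Ω} {ℱ : Filtration ℝ m} {T : ℝ} {a b S : Ω → ℝ}

lemma sup (ha : IsStoppingTimeIn ℱ T a) (hb : IsStoppingTimeIn ℱ T b) :
    IsStoppingTimeIn ℱ T (a ⊔ b) := by
  refine ⟨?_, fun ω => ⟨(ha.2 ω).1.trans le_sup_left, sup_le (ha.2 ω).2 (hb.2 ω).2⟩⟩
  simpa only [Pi.sup_apply, ← WithTop.coe_max] using ha.1.max hb.1

lemma inf (ha : IsStoppingTimeIn ℱ T a) (hb : IsStoppingTimeIn ℱ T b) :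
    IsStoppingTimeIn ℱ T (a ⊓ b) := by
  refine ⟨?_, fun ω => ⟨le_inf (ha.2 ω).1 (hb.2 ω).1, inf_le_left.trans (ha.2 ω).2⟩⟩
  simpa only [Pi.inf_apply, ← WithTop.coe_min] using ha.1.min hb.1

lemma piecewise {A : Set Ω} [DecidablePred (· ∈ A)]
    (hS : IsStoppingTime ℱ (fun ω => (S ω : WithTop ℝ)))
    (hA : MeasurableSet[hS.measurableSpace] A) (ha : IsStoppingTimeIn ℱ T a)
    (hb : IsStoppingTimeIn ℱ T b) (hSa : S ≤ a) (hSb : S ≤ b) :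
    IsStoppingTimeIn ℱ T (A.piecewise a b) := by
  refine ⟨fun t => ?_, fun ω => ?_⟩
  · have hset : {ω | ((A.piecewise a b ω : ℝ) : WithTop ℝ) ≤ t} =
        A ∩ {ω | (S ω : WithTop ℝ) ≤ t} ∩ {ω | (a ω : WithTop ℝ) ≤ t} ∪
          Aᶜ ∩ {ω | (S ω : WithTop ℝ) ≤ t} ∩ {ω | (b ω : WithTop ℝ) ≤ t} := by
      ext ω
      by_cases hω : ω ∈ A
      · simpa [hω] using fun h : a ω ≤ t => (hSa ω).trans h
      · simpa [hω] using fun h : b ω ≤ t => (hSb ω).trans h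
    rw [hset]
    exact ((hA.2 t).inter (ha.1 t)).union ((hA.compl.2 t).inter (hb.1 t))
  · by_cases hω : ω ∈ A
    · simpa [hω] using ha.2 ω
    · simpa [hω] using hb.2 ω

lemma partialSups {τ : ℕ → Ω → ℝ} (hτ : ∀ n, IsStoppingTimeIn ℱ T (τ n)) (n : ℕ) :
    IsStoppingTimeIn ℱ T (partialSups τ n) := by
  induction n with
  | zero => simpa using hτ 0
  | succ n ih => simpa only [partialSups_add_one] using ih.sup (hτ (n + 1))

end IsStoppingTimeIn

namespace Admissible

variable {m : MeasurableSpace Ω} {ℱ : Filtration ℝ m} {μ : Measure Ω} {T : ℝ}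
  {φ : (Ω → ℝ) → Ω → ℝ} {a b θ : Ω → ℝ}

lemma measurable (hφ : Admissible ℱ μ T φ) (hθ : IsStoppingTimeIn ℱ T θ) : Measurable (φ θ) :=
  (hφ.1 θ hθ).1.mono hθ.1.measurableSpace_le le_rfl

lemma ae_eq (hφ : Admissible ℱ μ T φ) (ha : IsStoppingTimeIn ℱ T a)
    (hb : IsStoppingTimeIn ℱ T b) (hab : a =ᵐ[μ] b) : φ a =ᵐ[μ] φ b := by
  filter_upwards [hφ.2 a b ha hb, hab] with ω h h' using h h'

lemma integrable (hφ : Admissible ℱ μ T φ) (hbdd : BddReward ℱ μ T φ)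
    (hθ : IsStoppingTimeIn ℱ T θ) : Integrable (φ θ) μ := by
  refine ⟨(hφ.measurable hθ).aestronglyMeasurable, ?_⟩
  rw [hasFiniteIntegral_iff_ofReal (ae_of_all _ (hφ.1 θ hθ).2)]
  exact (le_iSup_of_le ⟨θ, hθ⟩ le_rfl).trans_lt hbdd

lemma bddAbove_integral_image (hφ : Admissible ℱ μ T φ) (hbdd : BddReward ℱ μ T φ)
    {s : Set (Ω → ℝ)} (hs : ∀ θ ∈ s, IsStoppingTimeIn ℱ T θ) :
    BddAbove ((fun θ => ∫ ω, φ θ ω ∂μ) '' s) := by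
  refine ⟨(⨆ θ' : {θ' : Ω → ℝ // IsStoppingTimeIn ℱ T θ'},
      ∫⁻ ω, ENNReal.ofReal (φ θ'.1 ω) ∂μ).toReal, ?_⟩
  rintro _ ⟨θ, hθ, rfl⟩
  dsimp only
  rw [integral_eq_lintegral_of_nonneg_ae (ae_of_all _ (hφ.1 θ (hs θ hθ)).2)
    (hφ.measurable (hs θ hθ)).aestronglyMeasurable]
  exact ENNReal.toReal_mono hbdd.ne (le_iSup_of_le ⟨θ, hs θ hθ⟩ le_rfl)

lemma integral_sup_add_integral_inf (hφ : Admissible ℱ μ T φ) (hbdd : BddReward ℱ μ T φ)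
    (ha : IsStoppingTimeIn ℱ T a) (hb : IsStoppingTimeIn ℱ T b) :
    ∫ ω, φ (a ⊔ b) ω ∂μ + ∫ ω, φ (a ⊓ b) ω ∂μ = ∫ ω, φ a ω ∂μ + ∫ ω, φ b ω ∂μ := by
  have hpointwise : (fun ω => φ (a ⊔ b) ω + φ (a ⊓ b) ω) =ᵐ[μ] fun ω => φ a ω + φ b ω := by
    filter_upwards [hφ.2 _ a (ha.sup hb) ha, hφ.2 _ b (ha.sup hb) hb,
      hφ.2 _ a (ha.inf hb) ha, hφ.2 _ b (ha.inf hb) hb] with ω hsa hsb hia hib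
    rcases le_total (a ω) (b ω) with h | h
    · rw [hsb (sup_eq_right.2 h), hia (inf_eq_left.2 h), add_comm]
    · rw [hsa (sup_eq_left.2 h), hib (inf_eq_right.2 h)]
  rw [← integral_add (hφ.integrable hbdd (ha.sup hb)) (hφ.integrable hbdd (ha.inf hb)),
    ← integral_add (hφ.integrable hbdd ha) (hφ.integrable hbdd hb)]
  exact integral_congr_ae hpointwise

lemma piecewise_ae_eq (hφ : Admissible ℱ μ T φ) {A : Set Ω} [DecidablePred (· ∈ A)]
    (ha : IsStoppingTimeIn ℱ T a) (hb : IsStoppingTimeIn ℱ T b)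
    (hab : IsStoppingTimeIn ℱ T (A.piecewise a b)) :
    φ (A.piecewise a b) =ᵐ[μ] A.piecewise (φ a) (φ b) := by
  filter_upwards [hφ.2 _ a hab ha, hφ.2 _ b hab hb] with ω hA hAc
  by_cases hω : ω ∈ A
  · simpa [hω] using hA
  · simpa [hω] using hAc

end Admissible

lemma condExp_piecewise {m m₀ : MeasurableSpace Ω} {μ : Measure Ω}
    (hm : m ≤ m₀) {A : Set Ω} [DecidablePred (· ∈ A)] (hA : MeasurableSet[m] A) {f g : Ω → ℝ}
    (hf : Integrable f μ) (hg : Integrable g μ) :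
    μ[A.piecewise f g | m] =ᵐ[μ] A.piecewise (μ[f | m]) (μ[g | m]) := by
  rw [← Set.indicator_add_compl_eq_piecewise, ← Set.indicator_add_compl_eq_piecewise]
  exact (condExp_add (hf.indicator (hm A hA)) (hg.indicator (hm A hA).compl) m).trans
    ((condExp_indicator hf hA).add (condExp_indicator hg hA.compl))

section EssSup

variable {m : MeasurableSpace Ω} {μ : Measure Ω}

lemma exists_mem_ae_eq_partialSups {s : Set (Ω → ℝ)}
    (hdir : ∀ f ∈ s, ∀ g ∈ s, ∃ h ∈ s, h =ᵐ[μ] f ⊔ g) {f : ℕ → Ω → ℝ} (hf : ∀ k, f k ∈ s)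
    (n : ℕ) : ∃ h ∈ s, h =ᵐ[μ] partialSups f n := by
  induction n with
  | zero => exact ⟨f 0, hf 0, by rw [partialSups_zero]⟩
  | succ n ih =>
    obtain ⟨h, hs, hh⟩ := ih
    obtain ⟨h', hs', hh'⟩ := hdir h hs (f (n + 1)) (hf (n + 1))
    rw [partialSups_add_one]
    exact ⟨h', hs', hh'.trans (hh.sup (EventuallyEq.refl _ _))⟩

lemma exists_integrable_ae_le_integral_eq_of_monotone {h : ℕ → Ω → ℝ} {c : ℝ}
    (hmono : Monotone h) (hint : ∀ k, Integrable (h k) μ) (hnn : 0 ≤ᵐ[μ] h 0)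
    (hlim : Tendsto (fun k => ∫ ω, h k ω ∂μ) atTop (𝓝 c)) :
    ∃ g, Integrable g μ ∧ (∀ k, h k ≤ᵐ[μ] g) ∧ ∫ ω, g ω ∂μ = c := by
  have hnn' : ∀ k, 0 ≤ᵐ[μ] h k := fun k =>
    hnn.mono fun ω hω => hω.trans (hmono (Nat.zero_le k) ω)
  have hc : 0 ≤ c := ge_of_tendsto' hlim fun k => integral_nonneg_of_ae (hnn' k)
  set G : Ω → ℝ≥0∞ := fun ω => ⨆ k, ENNReal.ofReal (h k ω)
  have hGm : AEMeasurable G μ :=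
    AEMeasurable.iSup fun k => (hint k).aemeasurable.ennreal_ofReal
  have hGint : ∫⁻ ω, G ω ∂μ = ENNReal.ofReal c := by
    rw [lintegral_iSup' (fun k => (hint k).aemeasurable.ennreal_ofReal)
      (ae_of_all _ fun ω i j hij => ENNReal.ofReal_le_ofReal (hmono hij ω))]
    simp_rw [← ofReal_integral_eq_lintegral_ofReal (hint _) (hnn' _)]
    refine tendsto_nhds_unique (tendsto_atTop_iSup fun i j hij => ?_)
      ((ENNReal.continuous_ofReal.tendsto c).comp hlim)
    exact ENNReal.ofReal_le_ofReal (integral_mono (hint i) (hint j) (hmono hij))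
  have hGfin : ∀ᵐ ω ∂μ, G ω < ∞ := ae_lt_top' hGm (hGint ▸ ENNReal.ofReal_ne_top)
  refine ⟨fun ω => (G ω).toReal,
    integrable_toReal_of_lintegral_ne_top hGm (hGint ▸ ENNReal.ofReal_ne_top), fun k => ?_, ?_⟩
  · filter_upwards [hGfin, hnn' k] with ω hfin h0
    calc h k ω = (ENNReal.ofReal (h k ω)).toReal := (ENNReal.toReal_ofReal h0).symm
      _ ≤ (G ω).toReal :=
        ENNReal.toReal_mono hfin.ne (le_iSup (fun j => ENNReal.ofReal (h j ω)) k)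
  · rw [integral_toReal hGm hGfin, hGint, ENNReal.toReal_ofReal hc]

/-- `x ↦ (x ⊔ f) - x` is antitone, so `∫ (g ⊔ f) - ∫ g ≤ ∫ (h k ⊔ f) - ∫ h k ≤ c - ∫ h k → 0`. -/
lemma ae_le_of_integral_sup_le {f g : Ω → ℝ} {h : ℕ → Ω → ℝ} {c : ℝ}
    (hf : Integrable f μ) (hg : Integrable g μ) (hint : ∀ k, Integrable (h k) μ)
    (hhg : ∀ k, h k ≤ᵐ[μ] g) (hlim : Tendsto (fun k => ∫ ω, h k ω ∂μ) atTop (𝓝 c))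
    (hsup : ∀ k, ∫ ω, (h k ⊔ f) ω ∂μ ≤ c) : f ≤ᵐ[μ] g := by
  have hgap : ∀ k, ∫ ω, (g ⊔ f) ω ∂μ - ∫ ω, g ω ∂μ ≤ c - ∫ ω, h k ω ∂μ := fun k => by
    rw [← integral_sub (hg.sup hf) hg]
    refine (integral_mono_ae ((hg.sup hf).sub hg) (((hint k).sup hf).sub (hint k)) ?_).trans
      (by rw [integral_sub' ((hint k).sup hf) (hint k)]; linarith [hsup k])
    filter_upwards [hhg k] with ω hω
    simp only [Pi.sub_apply, Pi.sup_apply]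
    have := le_max_left (h k ω) (f ω)
    have := le_max_right (h k ω) (f ω)
    rcases le_total (f ω) (g ω) with hfg | hfg
    · rw [max_eq_left hfg]; linarith
    · rw [max_eq_right hfg]; linarith
  have hgap_le : ∫ ω, (g ⊔ f) ω ∂μ ≤ ∫ ω, g ω ∂μ := by
    have := ge_of_tendsto' (hlim.const_sub c) hgap
    linarith [sub_self c]
  have heq : g =ᵐ[μ] g ⊔ f :=
    (integral_eq_iff_of_ae_le hg (hg.sup hf) (ae_of_all _ fun ω => le_sup_left)).1
      (le_antisymm (integral_mono hg (hg.sup hf) fun ω => le_sup_left) hgap_le)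
  filter_upwards [heq] with ω hω
  exact hω ▸ le_sup_right

lemma exists_monotone_tendsto_sSup_integral {s : Set (Ω → ℝ)} (hne : s.Nonempty)
    (hint : ∀ f ∈ s, Integrable f μ) (hdir : ∀ f ∈ s, ∀ g ∈ s, ∃ h ∈ s, h =ᵐ[μ] f ⊔ g)
    (hbdd : BddAbove ((fun f => ∫ ω, f ω ∂μ) '' s)) :
    ∃ H : ℕ → Ω → ℝ, Monotone H ∧ (∀ n, ∃ h ∈ s, h =ᵐ[μ] H n) ∧
      Tendsto (fun n => ∫ ω, H n ω ∂μ) atTop (𝓝 (sSup ((fun f => ∫ ω, f ω ∂μ) '' s))) := by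
  set c := sSup ((fun f => ∫ ω, f ω ∂μ) '' s)
  have hnear : ∀ k : ℕ, ∃ f ∈ s, c - 1 / (k + 1) < ∫ ω, f ω ∂μ := fun k => by
    obtain ⟨_, ⟨f, hf, rfl⟩, hlt⟩ :=
      exists_lt_of_lt_csSup (hne.image _) (sub_lt_self c Nat.one_div_pos_of_nat)
    exact ⟨f, hf, hlt⟩
  choose f hfs hfc using hnear
  have hHs := exists_mem_ae_eq_partialSups hdir hfs
  refine ⟨partialSups f, (partialSups f).monotone, hHs, ?_⟩
  choose h hs hh using hHs
  have hHint : ∀ n, Integrable (partialSups f n) μ := fun n => (hint _ (hs n)).congr (hh n)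
  refine tendsto_of_tendsto_of_tendsto_of_le_of_le ?_ tendsto_const_nhds
    (fun n => (hfc n).le.trans (integral_mono (hint _ (hfs n)) (hHint n) (le_partialSups f n)))
    (fun n => integral_congr_ae (hh n) ▸ le_csSup hbdd (Set.mem_image_of_mem _ (hs n)))
  simpa using tendsto_one_div_add_atTop_nhds_zero_nat.const_sub c

theorem IsEssSupOf.integral_eq_sSup {s : Set (Ω → ℝ)} {v : Ω → ℝ} (hv : IsEssSupOf μ s v)
    (hvm : AEStronglyMeasurable v μ) (hne : s.Nonempty) (hint : ∀ f ∈ s, Integrable f μ)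
    (hnn : ∀ f ∈ s, 0 ≤ᵐ[μ] f) (hdir : ∀ f ∈ s, ∀ g ∈ s, ∃ h ∈ s, h =ᵐ[μ] f ⊔ g)
    (hbdd : BddAbove ((fun f => ∫ ω, f ω ∂μ) '' s)) :
    ∫ ω, v ω ∂μ = sSup ((fun f => ∫ ω, f ω ∂μ) '' s) := by
  obtain ⟨H, hHmono, hHs, hlim⟩ := exists_monotone_tendsto_sSup_integral hne hint hdir hbdd
  choose h hs hh using hHs
  have hle_sSup : ∀ f ∈ s, ∫ ω, f ω ∂μ ≤ sSup ((fun f => ∫ ω, f ω ∂μ) '' s) :=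
    fun f hf => le_csSup hbdd (Set.mem_image_of_mem _ hf)
  have hHint : ∀ n, Integrable (H n) μ := fun n => (hint _ (hs n)).congr (hh n)
  have hH0 : 0 ≤ᵐ[μ] H 0 := (hnn _ (hs 0)).trans (hh 0).le
  obtain ⟨g, hg, hHg, hgc⟩ :=
    exists_integrable_ae_le_integral_eq_of_monotone hHmono hHint hH0 hlim
  have hsg : ∀ f ∈ s, f ≤ᵐ[μ] g := fun f hf => by
    refine ae_le_of_integral_sup_le (hint f hf) hg hHint hHg hlim fun k => ?_
    obtain ⟨h', hs', hh'⟩ := hdir _ (hs k) f hf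
    exact integral_congr_ae (hh'.trans ((hh k).sup (EventuallyEq.refl _ _))) ▸ hle_sSup h' hs'
  have hvg : v ≤ᵐ[μ] g := hv.2 g hsg
  have hHv : ∀ n, H n ≤ᵐ[μ] v := fun n => (hh n).symm.trans_le (hv.1 _ (hs n))
  have hvint : Integrable v μ := by
    refine hg.mono hvm ?_
    filter_upwards [hvg, hH0.trans (hHv 0)] with ω hvg hv0
    rw [Real.norm_of_nonneg hv0, Real.norm_of_nonneg (hv0.trans hvg)]
    exact hvg
  refine le_antisymm ((integral_mono_ae hvint hg hvg).trans hgc.le) ?_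
  exact le_of_tendsto' hlim fun n => integral_mono_ae (hHint n) hvint (hHv n)

end EssSup

section ValueFunction

variable {m : MeasurableSpace Ω} {ℱ : Filtration ℝ m} {μ : Measure Ω} {T : ℝ}
  {φ : (Ω → ℝ) → Ω → ℝ} {R S : Ω → ℝ}

def rewardsFrom (ℱ : Filtration ℝ m) (μ : Measure Ω) (T : ℝ) (φ : (Ω → ℝ) → Ω → ℝ)
    (S : Ω → ℝ) : Set ℝ :=
  (fun θ => ∫ ω, φ θ ω ∂μ) '' {θ | MemTS ℱ μ T S θ}

def rewardsBetween (ℱ : Filtration ℝ m) (μ : Measure Ω) (T : ℝ) (φ : (Ω → ℝ) → Ω → ℝ)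
    (R S : Ω → ℝ) : Set ℝ :=
  (fun θ => ∫ ω, φ θ ω ∂μ) '' {θ | MemTS ℱ μ T R θ ∧ θ ≤ᵐ[μ] S}

lemma memTS_self (hS : IsStoppingTimeIn ℱ T S) : MemTS ℱ μ T S S :=
  ⟨hS, EventuallyLE.rfl⟩

/-- Paste `a ⊔ S` on the `F_S`-event where it does better and `b ⊔ S` elsewhere. -/
lemma exists_memTS_condExp_ae_eq_sup (hφ : Admissible ℱ μ T φ)
    (hbdd : BddReward ℱ μ T φ) (hS : IsStoppingTimeIn ℱ T S) {a b : Ω → ℝ}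
    (ha : MemTS ℱ μ T S a) (hb : MemTS ℱ μ T S b) :
    ∃ θ, MemTS ℱ μ T S θ ∧ μ[φ θ | hS.1.measurableSpace] =ᵐ[μ]
      μ[φ a | hS.1.measurableSpace] ⊔ μ[φ b | hS.1.measurableSpace] := by
  classical
  set mS := hS.1.measurableSpace
  have ha' := ha.1.sup hS
  have hb' := hb.1.sup hS
  have hφa : φ (a ⊔ S) =ᵐ[μ] φ a := hφ.ae_eq ha' ha.1 (ha.2.mono fun _ h => sup_eq_left.2 h)
  have hφb : φ (b ⊔ S) =ᵐ[μ] φ b := hφ.ae_eq hb' hb.1 (hb.2.mono fun _ h => sup_eq_left.2 h)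
  set A := {ω | μ[φ (b ⊔ S) | mS] ω ≤ μ[φ (a ⊔ S) | mS] ω}
  have hA : MeasurableSet[mS] A :=
    measurableSet_le stronglyMeasurable_condExp.measurable stronglyMeasurable_condExp.measurable
  have hθ := IsStoppingTimeIn.piecewise hS.1 hA ha' hb' (fun _ => le_sup_right)
    (fun _ => le_sup_right)
  refine ⟨A.piecewise (a ⊔ S) (b ⊔ S), ⟨hθ, ae_of_all _ fun ω => ?_⟩, ?_⟩
  · by_cases hω : ω ∈ A <;> simp [hω]
  calc μ[φ (A.piecewise (a ⊔ S) (b ⊔ S)) | mS]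
      =ᵐ[μ] μ[A.piecewise (φ (a ⊔ S)) (φ (b ⊔ S)) | mS] :=
        condExp_congr_ae (hφ.piecewise_ae_eq ha' hb' hθ)
    _ =ᵐ[μ] A.piecewise (μ[φ (a ⊔ S) | mS]) (μ[φ (b ⊔ S) | mS]) :=
        condExp_piecewise hS.1.measurableSpace_le hA (hφ.integrable hbdd ha')
          (hφ.integrable hbdd hb')
    _ = μ[φ (a ⊔ S) | mS] ⊔ μ[φ (b ⊔ S) | mS] := by
        ext ω
        by_cases hω : ω ∈ A
        · rw [Set.piecewise_eq_of_mem _ _ _ hω]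
          exact (max_eq_left hω).symm
        · rw [Set.piecewise_eq_of_notMem _ _ _ hω]
          exact (max_eq_right (not_le.1 hω).le).symm
    _ =ᵐ[μ] μ[φ a | mS] ⊔ μ[φ b | mS] := (condExp_congr_ae hφa).sup (condExp_congr_ae hφb)

lemma IsValueFam.integral_eq_sSup_rewardsFrom [IsFiniteMeasure μ]
    {v : (Ω → ℝ) → Ω → ℝ} (hv : IsValueFam ℱ μ T φ v) (hφ : Admissible ℱ μ T φ)
    (hbdd : BddReward ℱ μ T φ) (hS : IsStoppingTimeIn ℱ T S) :
    ∫ ω, v S ω ∂μ = sSup (rewardsFrom ℱ μ T φ S) := by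
  have hm := hS.1.measurableSpace_le
  have himage : (fun f => ∫ ω, f ω ∂μ) '' valueSet ℱ μ T φ S hS.1 = rewardsFrom ℱ μ T φ S := by
    ext x
    simp [valueSet, rewardsFrom, integral_condExp hm]
  rw [← himage]
  refine (hv S hS).2.integral_eq_sSup ((hv S hS).1.mono hm le_rfl).aestronglyMeasurable
    ⟨_, S, memTS_self hS, rfl⟩ ?_ ?_ ?_ ?_
  · rintro _ ⟨θ, -, rfl⟩
    exact integrable_condExp
  · rintro _ ⟨θ, hθ, rfl⟩
    exact condExp_nonneg (ae_of_all _ (hφ.1 θ hθ.1).2)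
  · rintro _ ⟨a, ha, rfl⟩ _ ⟨b, hb, rfl⟩
    obtain ⟨θ, hθ, h⟩ := exists_memTS_condExp_ae_eq_sup hφ hbdd hS ha hb
    exact ⟨_, ⟨θ, hθ, rfl⟩, h⟩
  · rw [himage]
    exact hφ.bddAbove_integral_image hbdd fun θ hθ => hθ.1

lemma sSup_rewardsFrom_le_of_ae_le (hφ : Admissible ℱ μ T φ) (hbdd : BddReward ℱ μ T φ)
    (hS : IsStoppingTimeIn ℱ T S) (hRS : R ≤ᵐ[μ] S) :
    sSup (rewardsFrom ℱ μ T φ S) ≤ sSup (rewardsFrom ℱ μ T φ R) :=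
  csSup_le_csSup (hφ.bddAbove_integral_image hbdd fun _ hθ => hθ.1)
    ⟨_, S, memTS_self hS, rfl⟩ (Set.image_mono fun _ hθ => ⟨hθ.1, hRS.trans hθ.2⟩)

/-- Split `θ ∈ T_R` into `θ ⊔ S ∈ T_S` and `θ ⊓ S`, which lies between `R` and `S`. -/
lemma sSup_rewardsFrom_le_add_sSup_rewardsBetween (hφ : Admissible ℱ μ T φ)
    (hbdd : BddReward ℱ μ T φ) (hS : IsStoppingTimeIn ℱ T S) (hRS : R ≤ᵐ[μ] S) :
    sSup (rewardsFrom ℱ μ T φ R) ≤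
      sSup (rewardsFrom ℱ μ T φ S) + sSup (rewardsBetween ℱ μ T φ R S) - ∫ ω, φ S ω ∂μ := by
  refine csSup_le ⟨_, S, ⟨hS, hRS⟩, rfl⟩ ?_
  rintro _ ⟨θ, hθ, rfl⟩
  have hsup : ∫ ω, φ (θ ⊔ S) ω ∂μ ≤ sSup (rewardsFrom ℱ μ T φ S) :=
    le_csSup (hφ.bddAbove_integral_image hbdd fun _ hθ => hθ.1)
      ⟨θ ⊔ S, ⟨hθ.1.sup hS, ae_of_all _ fun _ => le_sup_right⟩, rfl⟩
  have hRθS : R ≤ᵐ[μ] θ ⊓ S := by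
    filter_upwards [hθ.2, hRS] with ω h1 h2 using le_inf h1 h2
  have hinf : ∫ ω, φ (θ ⊓ S) ω ∂μ ≤ sSup (rewardsBetween ℱ μ T φ R S) :=
    le_csSup (hφ.bddAbove_integral_image hbdd fun _ hθ => hθ.1.1)
      ⟨θ ⊓ S, ⟨⟨hθ.1.inf hS, hRθS⟩, ae_of_all _ fun _ => inf_le_right⟩, rfl⟩
  have := hφ.integral_sup_add_integral_inf hbdd hθ.1 hS
  dsimp only
  linarith

/-- Running maxima `δ n = τ 0 ⊔ ⋯ ⊔ τ n` of `η 2⁻⁽ⁿ⁺¹⁾`-optimal `τ n`: by the lattice identity the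
errors add up along the induction, to less than `η`. -/
lemma exists_monotone_near_sSup_rewardsBetween (hφ : Admissible ℱ μ T φ)
    (hbdd : BddReward ℱ μ T φ) (hS : IsStoppingTimeIn ℱ T S) {R : ℕ → Ω → ℝ}
    (hRmono : ∀ n, R n ≤ᵐ[μ] R (n + 1)) (hRS : ∀ n, R n ≤ᵐ[μ] S) {η : ℝ} (hη : 0 < η) :
    ∃ δ : ℕ → Ω → ℝ, Monotone δ ∧ (∀ n, MemTS ℱ μ T (R n) (δ n) ∧ δ n ≤ᵐ[μ] S) ∧
      ∀ n, sSup (rewardsBetween ℱ μ T φ (R n) S) - η ≤ ∫ ω, φ (δ n) ω ∂μ := by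
  set W := fun n => sSup (rewardsBetween ℱ μ T φ (R n) S)
  have hnear : ∀ n, ∃ τ, (MemTS ℱ μ T (R n) τ ∧ τ ≤ᵐ[μ] S) ∧
      W n - η / 2 ^ (n + 1) < ∫ ω, φ τ ω ∂μ := fun n => by
    obtain ⟨_, ⟨τ, hτ, rfl⟩, hlt⟩ := exists_lt_of_lt_csSup (s := rewardsBetween ℱ μ T φ (R n) S)
      ⟨_, S, ⟨⟨hS, hRS n⟩, EventuallyLE.rfl⟩, rfl⟩
      (sub_lt_self (W n) (by positivity : 0 < η / 2 ^ (n + 1)))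
    exact ⟨τ, hτ, hlt⟩
  choose τ hτ hτW using hnear
  have hmem : ∀ n, MemTS ℱ μ T (R n) (partialSups τ n) ∧ partialSups τ n ≤ᵐ[μ] S := fun n => by
    refine ⟨⟨IsStoppingTimeIn.partialSups (fun j => (hτ j).1.1) n,
      EventuallyLE.trans (hτ n).1.2 (Eventually.of_forall fun ω => le_partialSups τ n ω)⟩, ?_⟩
    induction n with
    | zero => simpa using (hτ 0).2
    | succ n ih =>
      rw [partialSups_add_one]
      filter_upwards [ih, (hτ (n + 1)).2] with ω h1 h2 using sup_le h1 h2
  have hkey : ∀ n, W n - η + η / 2 ^ (n + 1) ≤ ∫ ω, φ (partialSups τ n) ω ∂μ := by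
    intro n
    induction n with
    | zero =>
      have := hτW 0
      simp only [zero_add, pow_one, partialSups_zero] at this ⊢
      linarith
    | succ n ih =>
      have hRinf : R n ≤ᵐ[μ] partialSups τ n ⊓ τ (n + 1) := by
        filter_upwards [(hmem n).1.2, (hτ (n + 1)).1.2, hRmono n] with ω h1 h2 h3
          using le_inf h1 (h3.trans h2)
      have hinf : ∫ ω, φ (partialSups τ n ⊓ τ (n + 1)) ω ∂μ ≤ W n :=
        le_csSup (hφ.bddAbove_integral_image hbdd fun _ hθ => hθ.1.1)
          ⟨_, ⟨⟨(hmem n).1.1.inf (hτ (n + 1)).1.1, hRinf⟩,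
            (hmem n).2.mono fun _ h => inf_le_left.trans h⟩, rfl⟩
      have hlat := hφ.integral_sup_add_integral_inf hbdd (hmem n).1.1 (hτ (n + 1)).1.1
      rw [partialSups_add_one]
      linarith [hτW (n + 1), (by ring : η / 2 ^ (n + 1) = 2 * (η / 2 ^ (n + 1 + 1)))]
  refine ⟨partialSups τ, (partialSups τ).monotone, hmem, fun n => ?_⟩
  have : 0 < η / 2 ^ (n + 1) := by positivity
  linarith [hkey n]

lemma tendsto_sSup_rewardsBetween (hφ : Admissible ℱ μ T φ) (hbdd : BddReward ℱ μ T φ)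
    (hlce : LCEFam ℱ μ T φ) (hS : IsStoppingTimeIn ℱ T S) {R : ℕ → Ω → ℝ}
    (hR : ∀ᵐ ω ∂μ, Monotone (fun n => R n ω) ∧ Tendsto (fun n => R n ω) atTop (𝓝 (S ω))) :
    Tendsto (fun n => sSup (rewardsBetween ℱ μ T φ (R n) S)) atTop (𝓝 (∫ ω, φ S ω ∂μ)) := by
  have hRS : ∀ n, R n ≤ᵐ[μ] S := fun n => hR.mono fun _ h => h.1.ge_of_tendsto h.2 n
  have hRmono : ∀ n, R n ≤ᵐ[μ] R (n + 1) := fun n => hR.mono fun _ h => h.1 n.le_succ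
  refine tendsto_order.2 ⟨fun a ha => Eventually.of_forall fun n => ha.trans_le
    (le_csSup (hφ.bddAbove_integral_image hbdd fun _ hθ => hθ.1.1)
      ⟨S, ⟨⟨hS, hRS n⟩, EventuallyLE.rfl⟩, rfl⟩), fun a ha => ?_⟩
  obtain ⟨δ, hδmono, hδ, hδW⟩ := exists_monotone_near_sSup_rewardsBetween hφ hbdd hS hRmono hRS
    (half_pos (sub_pos.2 ha))
  have hδS : ∀ᵐ ω ∂μ, Monotone (fun n => δ n ω) ∧
      Tendsto (fun n => δ n ω) atTop (𝓝 (S ω)) := by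
    filter_upwards [hR, ae_all_iff.2 fun n => (hδ n).1.2, ae_all_iff.2 fun n => (hδ n).2]
      with ω hRω hRδ hδS
    exact ⟨fun i j hij => hδmono hij ω,
      tendsto_of_tendsto_of_tendsto_of_le_of_le hRω.2 tendsto_const_nhds hRδ hδS⟩
  have hlim := hlce S δ hS (fun n => (hδ n).1.1) hδS
  filter_upwards [hlim.eventually_lt_const (by linarith :
    ∫ ω, φ S ω ∂μ < ∫ ω, φ S ω ∂μ + (a - ∫ ω, φ S ω ∂μ) / 2)]
    with n hn
  linarith [hδW n]

end ValueFunction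

theorem valueFunction_LCE_general {m : MeasurableSpace Ω}
    (ℱ : Filtration ℝ m) (μ : Measure Ω) [IsProbabilityMeasure μ]
    (T : ℝ)
    (φ : (Ω → ℝ) → Ω → ℝ) (hφ : Admissible ℱ μ T φ)
    (hlce : LCEFam ℱ μ T φ)
    (hbdd : BddReward ℱ μ T φ)
    (v : (Ω → ℝ) → Ω → ℝ) (hv : IsValueFam ℱ μ T φ v) :
    LCEFam ℱ μ T v := by
  intro S Sn hS hSn hconv
  have hSnS : ∀ n, Sn n ≤ᵐ[μ] S := fun n => hconv.mono fun _ h => h.1.ge_of_tendsto h.2 n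
  simp only [hv.integral_eq_sSup_rewardsFrom hφ hbdd, hS, hSn]
  have hupper := ((tendsto_sSup_rewardsBetween hφ hbdd hlce hS hconv).const_add
    (sSup (rewardsFrom ℱ μ T φ S))).sub_const (∫ ω, φ S ω ∂μ)
  rw [add_sub_cancel_right] at hupper
  exact tendsto_of_tendsto_of_tendsto_of_le_of_le tendsto_const_nhds hupper
    (fun n => sSup_rewardsFrom_le_of_ae_le hφ hbdd hS (hSnS n))
    (fun n => sSup_rewardsFrom_le_add_sSup_rewardsBetween hφ hbdd hS (hSnS n))

/-- **Proposition 1.6.** If the admissible family `φ` is LCE and RCE with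
`sup_{θ ∈ T_0} E[φ(θ)] < ∞`, then the value function family is LCE. -/
theorem valueFunction_LCE {m : MeasurableSpace Ω}
    (ℱ : Filtration ℝ m) (μ : Measure Ω) [IsProbabilityMeasure μ]
    (T : ℝ) (hT : 0 < T) (hF0 : TrivialF0 ℱ μ)
    (φ : (Ω → ℝ) → Ω → ℝ) (hφ : Admissible ℱ μ T φ)
    (hrce : RCEFam ℱ μ T φ) (hlce : LCEFam ℱ μ T φ)
    (hbdd : BddReward ℱ μ T φ)
    (v : (Ω → ℝ) → Ω → ℝ) (hv : IsValueFam ℱ μ T φ v) :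
    LCEFam ℱ μ T v :=
  valueFunction_LCE_general ℱ μ T φ hφ hlce hbdd v hv
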